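/- (Bäcklund transformation s₂ for Painlevé III′.) Let (q, p, H) solve the Painlevé III′ Hamiltonian system with parameters v1, v2 ∈ ℂ on an open set U ⊆ ℂ with 0 ∉ U. Define on −U := {−s : s ∈ U} the functions q̃(s) := −q(−s) and p̃(s) := 1 − p(−s). Then (q̃, p̃) solves the Painlevé III′ Hamiltonian system with parameters (v1, −v2) on −U, and its Hamiltonian H̃ satisfies (−s)·H̃(−s) = s·H(s) − s for all s ∈ U. -/

import Mathlib

open Complex

/-- `(q, p, H)` solves the Painlevé III′ Hamiltonian system with parameters
`v1, v2` on an open set `U ⊆ ℂ` with `0 ∉ U`. -/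
def SolvesPIII' (v1 v2 : ℂ) (U : Set ℂ) (q p H : ℂ → ℂ) : Prop :=
  IsOpen U ∧ (0 : ℂ) ∉ U ∧
    DifferentiableOn ℂ q U ∧ DifferentiableOn ℂ p U ∧
    (∀ s ∈ U, s * H s =
      q s ^ 2 * p s ^ 2 - (q s ^ 2 + v1 * q s - s) * p s
        + (1 / 2) * (v1 + v2) * q s) ∧
    (∀ s ∈ U, s * deriv q s = 2 * q s ^ 2 * p s - q s ^ 2 - v1 * q s + s) ∧
    (∀ s ∈ U, s * deriv p s =
      -2 * q s * p s ^ 2 + 2 * q s * p s + v1 * p s - (1 / 2) * (v1 + v2))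

/-! Under `s ↦ -s, q ↦ -q, p ↦ 1 - p, v2 ↦ -v2` the right-hand sides of `s·q' = …` and
`s·p' = …` change sign, and so do their left-hand sides, since by the chain rule
`s·q̃'(s) = -((-s)·q'(-s))`. The polynomial `s·H` merely shifts by `-s`. -/

theorem hasDerivAt_of_eq_const_sub_comp_neg {𝕜 : Type*} [NontriviallyNormedField 𝕜]
    {U : Set 𝕜} (hU : IsOpen U) {f g : 𝕜 → 𝕜} (hf : DifferentiableOn 𝕜 f U) (c : 𝕜)
    (hg : ∀ x, -x ∈ U → g x = c - f (-x)) {s : 𝕜} (hs : -s ∈ U) :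
    HasDerivAt g (deriv f (-s)) s := by
  have hf' : HasDerivAt f (deriv f (-s)) (-s) :=
    (hf.differentiableAt (hU.mem_nhds hs)).hasDerivAt
  have hreflect : HasDerivAt (fun x => c - f (-x)) (deriv f (-s)) s := by
    simpa using (hf'.comp s (hasDerivAt_neg s)).const_sub c
  refine hreflect.congr_of_eventuallyEq ?_
  filter_upwards [(hU.preimage continuous_neg).mem_nhds hs] with x hx using hg x hx

namespace PIII'

/-- The polynomial `s·H(s)` in terms of `s, q(s), p(s)`. -/
noncomputable def sHamiltonian (v1 v2 s q p : ℂ) : ℂ :=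
  q ^ 2 * p ^ 2 - (q ^ 2 + v1 * q - s) * p + (1 / 2) * (v1 + v2) * q

def qVelocity (v1 s q p : ℂ) : ℂ := 2 * q ^ 2 * p - q ^ 2 - v1 * q + s

noncomputable def pVelocity (v1 v2 q p : ℂ) : ℂ :=
  -2 * q * p ^ 2 + 2 * q * p + v1 * p - (1 / 2) * (v1 + v2)

theorem solvesPIII'_iff {v1 v2 : ℂ} {U : Set ℂ} {q p H : ℂ → ℂ} :
    SolvesPIII' v1 v2 U q p H ↔
      IsOpen U ∧ (0 : ℂ) ∉ U ∧ DifferentiableOn ℂ q U ∧ DifferentiableOn ℂ p U ∧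
        (∀ s ∈ U, s * H s = sHamiltonian v1 v2 s (q s) (p s)) ∧
        (∀ s ∈ U, s * deriv q s = qVelocity v1 s (q s) (p s)) ∧
        (∀ s ∈ U, s * deriv p s = pVelocity v1 v2 (q s) (p s)) :=
  Iff.rfl

variable (v1 v2 s q p : ℂ)

theorem sHamiltonian_backlund_s2 :
    sHamiltonian v1 (-v2) (-s) (-q) (1 - p) = sHamiltonian v1 v2 s q p - s := by
  unfold sHamiltonian; ring

theorem qVelocity_backlund_s2 :
    qVelocity v1 s (-q) (1 - p) = -qVelocity v1 (-s) q p := by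
  unfold qVelocity; ring

theorem pVelocity_backlund_s2 :
    pVelocity v1 (-v2) (-q) (1 - p) = -pVelocity v1 v2 q p := by
  unfold pVelocity; ring

end PIII'

open PIII' in
/-- Bäcklund transformation `s₂` for Painlevé III′: `q̃(s) = −q(−s)`,
`p̃(s) = 1 − p(−s)` solves the system with parameters `(v1, −v2)` on `−U`, and
`(−s)·H̃(−s) = s·H(s) − s`. -/
theorem painleveIIIprime_backlund_s2 (v1 v2 : ℂ) (U : Set ℂ)
    (q p H : ℂ → ℂ)
    (hsol : SolvesPIII' v1 v2 U q p H)
    (qt pt : ℂ → ℂ)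
    (hqt : ∀ s : ℂ, -s ∈ U → qt s = -q (-s))
    (hpt : ∀ s : ℂ, -s ∈ U → pt s = 1 - p (-s)) :
    ∃ Ht : ℂ → ℂ,
      SolvesPIII' v1 (-v2) {s : ℂ | -s ∈ U} qt pt Ht ∧
      ∀ s ∈ U, (-s) * Ht (-s) = s * H s - s := by
  obtain ⟨hU, hU0, hqd, hpd, hH, hq', hp'⟩ := solvesPIII'_iff.mp hsol
  have hqt' : ∀ s, -s ∈ U → HasDerivAt qt (deriv q (-s)) s :=
    fun s => hasDerivAt_of_eq_const_sub_comp_neg hU hqd 0 fun x hx => by rw [hqt x hx, zero_sub]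
  have hpt' : ∀ s, -s ∈ U → HasDerivAt pt (deriv p (-s)) s :=
    fun s => hasDerivAt_of_eq_const_sub_comp_neg hU hpd 1 hpt
  have hne : ∀ s, -s ∈ U → s ≠ 0 := by
    rintro s hs rfl
    exact hU0 (by simpa using hs)
  refine ⟨fun s => sHamiltonian v1 (-v2) s (qt s) (pt s) / s,
    solvesPIII'_iff.mpr ⟨hU.preimage continuous_neg, by simpa using hU0,
      fun s hs => (hqt' s hs).differentiableAt.differentiableWithinAt,
      fun s hs => (hpt' s hs).differentiableAt.differentiableWithinAt,
      fun s hs => mul_div_cancel₀ _ (hne s hs), fun s hs => ?_, fun s hs => ?_⟩, fun s hs => ?_⟩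
  · rw [(hqt' s hs).deriv, hqt s hs, hpt s hs, qVelocity_backlund_s2]
    linear_combination -hq' (-s) hs
  · rw [(hpt' s hs).deriv, hqt s hs, hpt s hs, pVelocity_backlund_s2]
    linear_combination -hp' (-s) hs
  · have hs' : -(-s) ∈ U := by rwa [neg_neg]
    beta_reduce
    rw [mul_div_cancel₀ _ (hne (-s) hs'), hqt _ hs', hpt _ hs', neg_neg,
      sHamiltonian_backlund_s2, hH s hs]
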